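/- arXiv:1807.06000 — 2 statements merged into one kernel-verified Lean document; each statement's English description precedes it below -/
import Mathlib

section
/- For every simplicial set X, the composite Λ_X ∘ N(ω_X) : N(el(sd X)) → sd(X) equals the last-vertex map last_{sd X} of the simplicial set sd(X), where ω_X : el(sd X) → el(X) is the functor over Q sending ([n], σ) to ([2n+1], σ). -/
/-!
`Q` sends top-preserving maps to active maps, so applying `Q` to the top-preserving ladder `β`
under `F` gives an active ladder under `ω_X ∘ F`. Active ladders under the maps `Q(d⊤)` are
unique, hence `α_k = Q(β_k)`, and `X(Q β_k)(σ)` is `(sd X)(β_k)(σ)` by definition of `sd`.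
-/

open CategoryTheory CategoryTheory.Limits Opposite Simplicial

namespace DecompPaper

def IsActive {a b : SimplexCategory} (f : a ⟶ b) : Prop :=
  f.toOrderHom 0 = 0 ∧ f.toOrderHom (Fin.last a.len) = Fin.last b.len

def IsInert {a b : SimplexCategory} (f : a ⟶ b) : Prop :=
  ∀ i : Fin a.len, (f.toOrderHom i.succ : ℕ) = (f.toOrderHom i.castSucc : ℕ) + 1

def IsTopPres {a b : SimplexCategory} (f : a ⟶ b) : Prop :=
  f.toOrderHom (Fin.last a.len) = Fin.last b.len

def IsDecomp (X : SSet.{0}) : Prop :=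
  ∀ ⦃a b c d : SimplexCategory⦄ (f : a ⟶ b) (g : a ⟶ c) (h : b ⟶ d) (k : c ⟶ d),
    IsActive f → IsInert g → IsPushout f g h k →
      IsPullback (X.map h.op) (X.map k.op) (X.map f.op) (X.map g.op)

def IsCULF {Y X : SSet.{0}} (F : Y ⟶ X) : Prop :=
  ∀ ⦃a b : SimplexCategory⦄ (g : a ⟶ b), IsActive g →
    IsPullback (Y.map g.op) (F.app (op b)) (F.app (op a)) (X.map g.op)

def IsRightFib {Y X : SSet.{0}} (F : Y ⟶ X) : Prop :=
  ∀ n : ℕ,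
    IsPullback (Y.map (SimplexCategory.δ (0 : Fin (n + 2))).op)
      (F.app (op (SimplexCategory.mk (n + 1)))) (F.app (op (SimplexCategory.mk n)))
      (X.map (SimplexCategory.δ (0 : Fin (n + 2))).op)

/-! ### The edgewise subdivision functor `Q` -/

def natApp {m n : ℕ} (f : Fin (m + 1) →o Fin (n + 1)) (t : ℕ) : ℕ :=
  (f ⟨min t m, Nat.lt_succ_of_le (min_le_right t m)⟩ : ℕ)

lemma natApp_le {m n : ℕ} (f : Fin (m + 1) →o Fin (n + 1)) (t : ℕ) : natApp f t ≤ n :=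
  Nat.lt_succ_iff.mp (f _).isLt

lemma natApp_mono {m n : ℕ} (f : Fin (m + 1) →o Fin (n + 1)) {s t : ℕ} (h : s ≤ t) :
    natApp f s ≤ natApp f t :=
  f.monotone (by simp only [Fin.mk_le_mk]; omega)

lemma natApp_of_le {m n : ℕ} (f : Fin (m + 1) →o Fin (n + 1)) {t : ℕ} (h : t ≤ m) :
    natApp f t = (f ⟨t, by omega⟩ : ℕ) := by
  have harg : (⟨min t m, Nat.lt_succ_of_le (min_le_right t m)⟩ : Fin (m + 1)) = ⟨t, by omega⟩ :=
    Fin.ext (Nat.min_eq_left h)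
  unfold natApp
  rw [harg]

lemma natApp_comp {l m n : ℕ} (f : Fin (l + 1) →o Fin (m + 1)) (g : Fin (m + 1) →o Fin (n + 1))
    (t : ℕ) : natApp (g.comp f) t = natApp g (natApp f t) := by
  have h : natApp f t ≤ m := natApp_le f t
  rw [natApp_of_le g h]
  unfold natApp
  rfl

def Qfun {m n : ℕ} (f : Fin (m + 1) →o Fin (n + 1)) : Fin (2 * m + 2) → Fin (2 * n + 2) :=
  fun i =>
    if (i : ℕ) ≤ m then ⟨n - natApp f (m - (i : ℕ)), by omega⟩
    else ⟨n + 1 + natApp f ((i : ℕ) - (m + 1)), by have := natApp_le f ((i : ℕ) - (m + 1)); omega⟩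

lemma Qfun_val_le {m n : ℕ} (f : Fin (m + 1) →o Fin (n + 1)) (i : Fin (2 * m + 2))
    (h : (i : ℕ) ≤ m) : (Qfun f i : ℕ) = n - natApp f (m - (i : ℕ)) := by
  unfold Qfun; rw [if_pos h]

lemma Qfun_val_gt {m n : ℕ} (f : Fin (m + 1) →o Fin (n + 1)) (i : Fin (2 * m + 2))
    (h : ¬ (i : ℕ) ≤ m) : (Qfun f i : ℕ) = n + 1 + natApp f ((i : ℕ) - (m + 1)) := by
  unfold Qfun; rw [if_neg h]

lemma Qfun_monotone {m n : ℕ} (f : Fin (m + 1) →o Fin (n + 1)) : Monotone (Qfun f) := by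
  intro i j hij
  have hij' : (i : ℕ) ≤ (j : ℕ) := hij
  rw [Fin.le_def]
  by_cases hi : (i : ℕ) ≤ m <;> by_cases hj : (j : ℕ) ≤ m
  · rw [Qfun_val_le f i hi, Qfun_val_le f j hj]
    have h1 := natApp_mono f (show m - (j : ℕ) ≤ m - (i : ℕ) by omega)
    have h2 := natApp_le f (m - (i : ℕ))
    omega
  · rw [Qfun_val_le f i hi, Qfun_val_gt f j hj]
    omega
  · omega
  · rw [Qfun_val_gt f i hi, Qfun_val_gt f j hj]
    have h1 := natApp_mono f (show (i : ℕ) - (m + 1) ≤ (j : ℕ) - (m + 1) by omega)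
    omega

def Q : SimplexCategory ⥤ SimplexCategory where
  obj a := SimplexCategory.mk (2 * a.len + 1)
  map {a b} f := SimplexCategory.Hom.mk ⟨Qfun f.toOrderHom, Qfun_monotone f.toOrderHom⟩
  map_id a := by
    apply SimplexCategory.Hom.ext
    apply OrderHom.ext
    funext i
    apply Fin.ext
    show (Qfun (SimplexCategory.Hom.toOrderHom (𝟙 a)) i : ℕ) = (i : ℕ)
    have hi : (i : ℕ) < 2 * a.len + 2 := i.isLt
    have hid : ∀ t : ℕ, natApp (SimplexCategory.Hom.toOrderHom (𝟙 a)) t = min t a.len :=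
      fun t => rfl
    by_cases h : (i : ℕ) ≤ a.len
    · rw [Qfun_val_le _ i h, hid]; omega
    · rw [Qfun_val_gt _ i h, hid]; omega
  map_comp {a b c} f g := by
    apply SimplexCategory.Hom.ext
    apply OrderHom.ext
    funext i
    apply Fin.ext
    show (Qfun (SimplexCategory.Hom.toOrderHom (f ≫ g)) i : ℕ)
        = (Qfun g.toOrderHom (Qfun f.toOrderHom i) : ℕ)
    have hi : (i : ℕ) < 2 * a.len + 2 := i.isLt
    have h2 : SimplexCategory.Hom.toOrderHom (f ≫ g)
        = g.toOrderHom.comp f.toOrderHom := rfl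
    rw [h2]
    by_cases h : (i : ℕ) ≤ a.len
    · have hA := natApp_le f.toOrderHom (a.len - (i : ℕ))
      have hfi : ((Qfun f.toOrderHom i : Fin (2 * b.len + 2)) : ℕ) ≤ b.len := by
        rw [Qfun_val_le _ i h]; omega
      rw [Qfun_val_le _ i h, Qfun_val_le _ _ hfi, Qfun_val_le _ i h, natApp_comp]
      rw [show b.len - (b.len - natApp f.toOrderHom (a.len - (i : ℕ)))
          = natApp f.toOrderHom (a.len - (i : ℕ)) by omega]
    · have hA := natApp_le f.toOrderHom ((i : ℕ) - (a.len + 1))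
      have hfi : ¬ ((Qfun f.toOrderHom i : Fin (2 * b.len + 2)) : ℕ) ≤ b.len := by
        rw [Qfun_val_gt _ i h]; omega
      rw [Qfun_val_gt _ i h, Qfun_val_gt _ _ hfi, Qfun_val_gt _ i h, natApp_comp]
      rw [show b.len + 1 + natApp f.toOrderHom ((i : ℕ) - (a.len + 1)) - (b.len + 1)
          = natApp f.toOrderHom ((i : ℕ) - (a.len + 1)) by omega]

/-- Edgewise subdivision of simplicial sets: precomposition with `Qᵒᵖ`. -/
def sdF : SSet.{0} ⥤ SSet.{0} :=
  (Functor.whiskeringLeft SimplexCategoryᵒᵖ SimplexCategoryᵒᵖ (Type 0)).obj Q.op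

/-- The unique active map `[1] ⟶ [m]`. -/
def act1 (m : ℕ) : SimplexCategory.mk 1 ⟶ SimplexCategory.mk m :=
  SimplexCategory.Hom.mk
    ⟨fun i => if (i : ℕ) = 0 then ⟨0, by omega⟩ else Fin.last m, by
      intro i j hij
      by_cases h : (i : ℕ) = 0
      · by_cases h' : (j : ℕ) = 0 <;> simp [h, h', Fin.le_def]
      · have : (j : ℕ) ≠ 0 := by have := Fin.le_def.mp hij; omega
        simp [h, this]⟩

/-- The vertex `t` as a map `[0] ⟶ [n]`. -/
def vert (n : ℕ) (t : Fin (n + 1)) : SimplexCategory.mk 0 ⟶ SimplexCategory.mk n :=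
  SimplexCategory.Hom.mk (OrderHom.const _ t)

/-- The `i`-th edge inclusion `[1] ⟶ [n]`. -/
def edgeIncl (n : ℕ) (i : Fin n) : SimplexCategory.mk 1 ⟶ SimplexCategory.mk n :=
  SimplexCategory.Hom.mk
    ⟨fun j => ⟨(i : ℕ) + (j : ℕ), by
        have h1 := i.isLt
        have h2 := j.isLt
        simp only [SimplexCategory.len_mk] at h2 ⊢
        omega⟩, by
      intro x y h
      have := Fin.le_def.mp h
      simp only [Fin.mk_le_mk]
      omega⟩

/-- The set of chains of `k` composable edges in a simplicial set. -/
def SegalChains (X : SSet.{0}) (k : ℕ) : Type :=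
  {p : Fin k → X.obj (op (SimplexCategory.mk 1)) //
    ∀ i j : Fin k, (j : ℕ) = (i : ℕ) + 1 →
      X.map (vert 1 1).op (p i) = X.map (vert 1 0).op (p j)}

/-- The spine (Segal) map from `k`-simplices to chains of `k` edges. -/
def spine (X : SSet.{0}) (k : ℕ) (σ : X.obj (op (SimplexCategory.mk k))) : SegalChains X k :=
  ⟨fun i => X.map (edgeIncl k i).op σ, by
    intro i j hij
    have h1 : vert 1 1 ≫ edgeIncl k i = vert 1 0 ≫ edgeIncl k j := by
      apply SimplexCategory.Hom.ext
      apply OrderHom.ext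
      funext z
      apply Fin.ext
      show ((edgeIncl k i).toOrderHom ((vert 1 1).toOrderHom z) : ℕ)
          = ((edgeIncl k j).toOrderHom ((vert 1 0).toOrderHom z) : ℕ)
      show ((i : ℕ) + ((1 : Fin 2) : ℕ)) = ((j : ℕ) + ((0 : Fin 2) : ℕ))
      simp
      omega
    calc X.map (vert 1 1).op (X.map (edgeIncl k i).op σ)
        = X.map ((vert 1 1 ≫ edgeIncl k i).op) σ := by
          rw [op_comp, FunctorToTypes.map_comp_apply]
      _ = X.map ((vert 1 0 ≫ edgeIncl k j).op) σ := by rw [h1]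
      _ = X.map (vert 1 0).op (X.map (edgeIncl k j).op σ) := by
          rw [op_comp, FunctorToTypes.map_comp_apply]⟩


/-! ### The category of decomposition spaces and CULF maps -/

lemma IsCULF.id (X : SSet.{0}) : IsCULF (𝟙 X) := by
  intro a b g hg
  have : (𝟙 X : X ⟶ X).app (op b) = 𝟙 (X.obj (op b)) := rfl
  refine IsPullback.of_vert_isIso ⟨by simp⟩

lemma IsCULF.comp {X Y Z : SSet.{0}} {f : X ⟶ Y} {g : Y ⟶ Z} (hf : IsCULF f) (hg : IsCULF g) :
    IsCULF (f ≫ g) := by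
  intro a b s hs
  simpa using (hf s hs).paste_vert (hg s hs)

/-- The category of decomposition spaces and CULF maps. -/
structure DecompCat : Type 1 where
  X : SSet.{0}
  decomp : IsDecomp X

instance : Category.{0} DecompCat where
  Hom A B := {f : A.X ⟶ B.X // IsCULF f}
  id A := ⟨𝟙 A.X, IsCULF.id A.X⟩
  comp f g := ⟨f.1 ≫ g.1, f.2.comp g.2⟩
  id_comp f := Subtype.ext (Category.id_comp f.1)
  comp_id f := Subtype.ext (Category.comp_id f.1)
  assoc f g h := Subtype.ext (Category.assoc f.1 g.1 h.1)

/-! ### Discrete fibrations -/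

/-- A functor is a discrete fibration if every morphism into the image of an object
has a unique lift with that object as codomain. -/
def IsDiscreteFibration {E C : Type*} [Category E] [Category C] (p : E ⥤ C) : Prop :=
  ∀ (y : E) (c : C) (f : c ⟶ p.obj y),
    ∃! g : Σ x : E, x ⟶ y, ∃ h : p.obj g.1 = c, p.map g.2 = eqToHom h ≫ f

/-- The category of discrete fibrations over `T`, with morphisms the functors over `T`. -/
structure DFibOver (T : Type) [SmallCategory T] : Type 1 where
  E : Type
  [cat : SmallCategory E]
  p : E ⥤ T
  fib : IsDiscreteFibration p

attribute [instance] DFibOver.cat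

instance {T : Type} [SmallCategory T] : Category.{0} (DFibOver T) where
  Hom A B := {G : A.E ⥤ B.E // G ⋙ B.p = A.p}
  id A := ⟨𝟭 A.E, Functor.id_comp A.p⟩
  comp f g := ⟨f.1 ⋙ g.1, by rw [Functor.assoc, g.2, f.2]⟩
  id_comp f := Subtype.ext (Functor.id_comp f.1)
  comp_id f := Subtype.ext (Functor.comp_id f.1)
  assoc f g h := Subtype.ext (Functor.assoc f.1 g.1 h.1)

/-! ### The category of elements of a simplicial set -/

/-- The category of elements of a simplicial set `X`: objects are simplices of `X`;
a morphism `(m, τ) ⟶ (n, σ)` is a map `f : [m] ⟶ [n]` of `Δ` with `X(f)(σ) = τ`. -/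
structure El (X : SSet.{0}) : Type where
  n : ℕ
  σ : X.obj (op (SimplexCategory.mk n))

instance (X : SSet.{0}) : SmallCategory (El X) where
  Hom a b := {f : SimplexCategory.mk a.n ⟶ SimplexCategory.mk b.n // X.map f.op b.σ = a.σ}
  id a := ⟨𝟙 _, by simp⟩
  comp {a b c} f g := ⟨f.1 ≫ g.1, by
    rw [op_comp, FunctorToTypes.map_comp_apply, g.2, f.2]⟩
  id_comp f := Subtype.ext (Category.id_comp f.1)
  comp_id f := Subtype.ext (Category.comp_id f.1)
  assoc f g h := Subtype.ext (Category.assoc f.1 g.1 h.1)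

/-- Functoriality of the category of elements in the simplicial set. -/
def elMap {X Y : SSet.{0}} (f : X ⟶ Y) : El X ⥤ El Y where
  obj e := ⟨e.n, f.app _ e.σ⟩
  map {a b} g := ⟨g.1, by
    have h := FunctorToTypes.naturality f g.1.op b.σ
    dsimp only
    rw [← h, g.2]⟩
  map_id a := Subtype.ext rfl
  map_comp f g := Subtype.ext rfl

/-- The functor `ω_X : el(sd X) ⥤ el(X)` lying over `Q`. -/
def elSd (X : SSet.{0}) : El (sdF.obj X) ⥤ El X where
  obj e := ⟨2 * e.n + 1, e.σ⟩
  map {a b} g := ⟨Q.map g.1, g.2⟩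
  map_id a := Subtype.ext (Q.map_id _)
  map_comp f g := Subtype.ext (Q.map_comp f.1 g.1)

/-- The objects (dimensions) of the chain in `Δ` underlying a `k`-simplex of the nerve of
the category of elements. -/
def chainObj {X : SSet.{0}} {k : ℕ} (F : ComposableArrows (El X) k) : Fin (k + 1) → ℕ :=
  fun i => (F.obj i).n

/-- The consecutive maps in `Δ` underlying a `k`-simplex of the nerve of the category of
elements. -/
def chainMap {X : SSet.{0}} {k : ℕ} (F : ComposableArrows (El X) k) :
    ∀ i : Fin k, SimplexCategory.mk (chainObj F i.castSucc) ⟶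
      SimplexCategory.mk (chainObj F i.succ) :=
  fun i => (F.map (homOfLE (Fin.castSucc_lt_succ (i := i)).le)).1

/-! ### Ladders -/

/-- `IsLadderA n f α` says that `α` is a commutative ladder from the chain of maps
`Q(d⊤) : Q[i] ⟶ Q[i+1]` to the chain `f` with all vertical maps `α i : Q[i] ⟶ [n i]`
active. -/
def IsLadderA {k : ℕ} (n : Fin (k + 1) → ℕ)
    (f : ∀ i : Fin k, SimplexCategory.mk (n i.castSucc) ⟶ SimplexCategory.mk (n i.succ))
    (α : ∀ i : Fin (k + 1), Q.obj (SimplexCategory.mk (i : ℕ)) ⟶ SimplexCategory.mk (n i)) :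
    Prop :=
  (∀ i, IsActive (α i)) ∧
    ∀ i : Fin k, Q.map (SimplexCategory.δ (Fin.last ((i : ℕ) + 1))) ≫ α i.succ
      = α i.castSucc ≫ f i

/-- `IsLadderB n f β` says that `β` is a commutative ladder from the chain of top coface maps
`d⊤ : [i] ⟶ [i+1]` to the chain `f` with all vertical maps `β i : [i] ⟶ [n i]`
top-preserving. -/
def IsLadderB {k : ℕ} (n : Fin (k + 1) → ℕ)
    (f : ∀ i : Fin k, SimplexCategory.mk (n i.castSucc) ⟶ SimplexCategory.mk (n i.succ))
    (β : ∀ i : Fin (k + 1), SimplexCategory.mk (i : ℕ) ⟶ SimplexCategory.mk (n i)) : Prop :=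
  (∀ i, IsTopPres (β i)) ∧
    ∀ i : Fin k, SimplexCategory.δ (Fin.last ((i : ℕ) + 1)) ≫ β i.succ = β i.castSucc ≫ f i

/-- `IsLambda Λ` says that the family of simplicial maps `Λ X : N(el X) ⟶ sd X` is,
in each degree, given by sending a `k`-simplex `([n₀] → ⋯ → [n_k], σ)` to `X(α_k)(σ)`,
where `α_k : Q[k] ⟶ [n_k]` is the last vertical map of the (unique) active ladder over the
underlying chain in `Δ`. -/
def IsLambda (Λ : ∀ X : SSet.{0}, nerve (El X) ⟶ sdF.obj X) : Prop :=
  ∀ (X : SSet.{0}) (k : ℕ) (F : ComposableArrows (El X) k),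
    ∃ α, IsLadderA (chainObj F) (chainMap F) α ∧
      (Λ X).app (op (SimplexCategory.mk k)) F
        = X.map (α (Fin.last k)).op (F.obj (Fin.last k)).σ

/-! ### The last-segment inclusion and `cod` -/

/-- The last-segment inclusion `[n] ⟶ Q[n] = [2n+1]`. -/
def Lhom (a : SimplexCategory) : a ⟶ Q.obj a :=
  SimplexCategory.Hom.mk
    ⟨fun i => ⟨a.len + 1 + (i : ℕ), by
        have h : (i : ℕ) < a.len + 1 := i.isLt
        exact show a.len + 1 + (i : ℕ) < 2 * a.len + 1 + 1 by omega⟩,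
      by intro i j hle; show a.len + 1 + (i : ℕ) ≤ a.len + 1 + (j : ℕ); have := Fin.le_def.mp hle; omega⟩

/-- The natural transformation `id ⇒ Q` given by the last-segment inclusions
`[n] ⟶ [2n+1]`. -/
def Lnat : 𝟭 SimplexCategory ⟶ Q where
  app := Lhom
  naturality a b f := by
    apply SimplexCategory.Hom.ext
    apply OrderHom.ext
    funext i
    apply Fin.ext
    have hi : (i : ℕ) < a.len + 1 := i.isLt
    have h1 : (SimplexCategory.Hom.toOrderHom ((𝟭 SimplexCategory).map f ≫ Lhom b) i : ℕ)
        = b.len + 1 + (f.toOrderHom i : ℕ) := rfl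
    have h4 : ((Lhom a).toOrderHom i : ℕ) = a.len + 1 + (i : ℕ) := rfl
    have key : (SimplexCategory.Hom.toOrderHom (Lhom a ≫ Q.map f) i : ℕ)
        = b.len + 1 + (f.toOrderHom i : ℕ) := by
      have h3 : ¬ ((Lhom a).toOrderHom i : ℕ) ≤ a.len := by omega
      have h5 : (SimplexCategory.Hom.toOrderHom (Lhom a ≫ Q.map f) i : ℕ)
          = (Qfun f.toOrderHom ((Lhom a).toOrderHom i) : ℕ) := rfl
      rw [h5, Qfun_val_gt f.toOrderHom _ h3, h4,
        show a.len + 1 + (i : ℕ) - (a.len + 1) = (i : ℕ) by omega,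
        natApp_of_le f.toOrderHom (show (i : ℕ) ≤ a.len by omega)]
      exact congrArg (fun z : Fin (a.len + 1) => b.len + 1 + (f.toOrderHom z : ℕ))
        (Fin.ext rfl)
    exact h1.trans key.symm

/-- The map `cod_X : sd(X) ⟶ X` induced by the last-segment inclusions. -/
def codN (X : SSet.{0}) : sdF.obj X ⟶ X := Functor.whiskerRight (NatTrans.op Lnat) X

/-! ### Strict pullbacks of categories -/

/-- The strict pullback of a functor `p` along a functor `G`. -/
structure StrictPB {A B C : Type} [SmallCategory A] [SmallCategory B] [SmallCategory C]
    (G : A ⥤ C) (p : B ⥤ C) : Type where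
  pt : A
  fib : B
  eq : p.obj fib = G.obj pt

instance {A B C : Type} [SmallCategory A] [SmallCategory B] [SmallCategory C]
    (G : A ⥤ C) (p : B ⥤ C) : SmallCategory (StrictPB G p) where
  Hom x y := {fg : (x.pt ⟶ y.pt) × (x.fib ⟶ y.fib) //
    p.map fg.2 = eqToHom x.eq ≫ G.map fg.1 ≫ eqToHom y.eq.symm}
  id x := ⟨(𝟙 x.pt, 𝟙 x.fib), by simp⟩
  comp {x y z} f g := ⟨(f.1.1 ≫ g.1.1, f.1.2 ≫ g.1.2), by
    rw [p.map_comp, f.2, g.2, G.map_comp]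
    simp⟩
  id_comp f := Subtype.ext (Prod.ext (Category.id_comp f.1.1) (Category.id_comp f.1.2))
  comp_id f := Subtype.ext (Prod.ext (Category.comp_id f.1.1) (Category.comp_id f.1.2))
  assoc f g h := Subtype.ext (Prod.ext (Category.assoc _ _ _) (Category.assoc _ _ _))

/-- Projection of the strict pullback to the base. -/
def pbProj {A B C : Type} [SmallCategory A] [SmallCategory B] [SmallCategory C]
    (G : A ⥤ C) (p : B ⥤ C) : StrictPB G p ⥤ A where
  obj x := x.pt
  map f := f.1.1
  map_id x := rfl
  map_comp f g := rfl

lemma natApp_δ_last (m t : ℕ) :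
    natApp (SimplexCategory.δ (Fin.last (m + 1))).toOrderHom t = min t m := by
  unfold natApp
  show ((Fin.last (m + 1)).succAbove ⟨min t m, _⟩ : ℕ) = min t m
  rw [Fin.succAbove_of_castSucc_lt _ _ (Fin.castSucc_lt_last _)]
  rfl

lemma Q_map_δ_last_apply (m : ℕ) (j : Fin (2 * m + 2)) :
    ((Q.map (SimplexCategory.δ (Fin.last (m + 1)))).toOrderHom j : ℕ) = j + 1 := by
  show (Qfun (SimplexCategory.δ (Fin.last (m + 1))).toOrderHom j : ℕ) = j + 1
  have hj := j.isLt
  by_cases h : (j : ℕ) ≤ m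
  · rw [Qfun_val_le _ j h, natApp_δ_last]
    simp only [SimplexCategory.len_mk]
    omega
  · rw [Qfun_val_gt _ j h, natApp_δ_last]
    simp only [SimplexCategory.len_mk]
    omega

lemma isActive_Q_map {a b : SimplexCategory} {g : a ⟶ b} (hg : IsTopPres g) :
    IsActive (Q.map g) := by
  have hlast : natApp g.toOrderHom a.len = b.len := by
    rw [natApp_of_le g.toOrderHom le_rfl]
    exact congrArg Fin.val hg
  constructor
  · apply Fin.ext
    show (Qfun g.toOrderHom 0 : ℕ) = 0
    rw [Qfun_val_le g.toOrderHom 0 (Nat.zero_le _)]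
    simp only [Fin.val_zero, Nat.sub_zero]
    omega
  · apply Fin.ext
    show (Qfun g.toOrderHom (Fin.last (2 * a.len + 1)) : ℕ) = 2 * b.len + 1
    rw [Qfun_val_gt g.toOrderHom _ (by simp only [Fin.val_last]; omega), Fin.val_last,
      show 2 * a.len + 1 - (a.len + 1) = a.len by omega, hlast]
    omega

lemma IsActive.ext_of_len_eq_one {b : SimplexCategory} {g g' : SimplexCategory.mk 1 ⟶ b}
    (hg : IsActive g) (hg' : IsActive g') : g = g' := by
  ext x : 3
  match x with
  | 0 => rw [hg.1, hg'.1]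
  | 1 => exact hg.2.trans hg'.2.symm

/-- `Q(d⊤) : [2m+1] ⟶ [2m+3]` is the shift `j ↦ j + 1`, whose image misses only the two
endpoints, where active maps are pinned down. -/
lemma IsActive.ext_of_Q_map_δ_last_comp {m : ℕ} {b : SimplexCategory}
    {g g' : Q.obj (SimplexCategory.mk (m + 1)) ⟶ b} (hg : IsActive g) (hg' : IsActive g')
    (h : Q.map (SimplexCategory.δ (Fin.last (m + 1))) ≫ g
      = Q.map (SimplexCategory.δ (Fin.last (m + 1))) ≫ g') : g = g' := by
  ext x : 3
  have hx : (x : ℕ) < 2 * m + 4 := x.isLt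
  by_cases h0 : (x : ℕ) = 0
  · rw [show x = 0 from Fin.ext h0, hg.1, hg'.1]
  by_cases hl : (x : ℕ) = 2 * m + 3
  · rw [show x = Fin.last _ from Fin.ext hl, hg.2, hg'.2]
  let y : Fin (2 * m + 2) := ⟨x - 1, by omega⟩
  have hshift : (Q.map (SimplexCategory.δ (Fin.last (m + 1)))).toOrderHom y = x :=
    Fin.ext ((Q_map_δ_last_apply m y).trans (Nat.sub_add_cancel (by omega)))
  rw [← hshift]
  exact congrArg (fun f => f.toOrderHom y) h

lemma IsLadderA.ext {k : ℕ} {n : Fin (k + 1) → ℕ}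
    {f : ∀ i : Fin k, SimplexCategory.mk (n i.castSucc) ⟶ SimplexCategory.mk (n i.succ)}
    {α α' : ∀ i : Fin (k + 1), Q.obj (SimplexCategory.mk (i : ℕ)) ⟶ SimplexCategory.mk (n i)}
    (hα : IsLadderA n f α) (hα' : IsLadderA n f α') (i : Fin (k + 1)) : α i = α' i := by
  induction i using Fin.induction with
  | zero => exact IsActive.ext_of_len_eq_one (hα.1 0) (hα'.1 0)
  | succ i ih =>
    refine IsActive.ext_of_Q_map_δ_last_comp (hα.1 i.succ) (hα'.1 i.succ) ?_
    rw [hα.2 i, hα'.2 i, ih]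

lemma IsLadderB.Q_map {k : ℕ} {n : Fin (k + 1) → ℕ}
    {f : ∀ i : Fin k, SimplexCategory.mk (n i.castSucc) ⟶ SimplexCategory.mk (n i.succ)}
    {β : ∀ i : Fin (k + 1), SimplexCategory.mk (i : ℕ) ⟶ SimplexCategory.mk (n i)}
    (hβ : IsLadderB n f β) :
    IsLadderA (fun i => 2 * n i + 1) (fun i => Q.map (f i)) (fun i => Q.map (β i)) :=
  ⟨fun i => isActive_Q_map (hβ.1 i), fun i =>
    (Q.map_comp _ _).symm.trans ((congrArg Q.map (hβ.2 i)).trans (Q.map_comp _ _))⟩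

theorem statement14 (Λ : ∀ X : SSet.{0}, nerve (El X) ⟶ sdF.obj X) (hΛ : IsLambda Λ)
    (X : SSet.{0}) (k : ℕ) (F : ComposableArrows (El (sdF.obj X)) k)
    (β : ∀ i : Fin (k + 1), SimplexCategory.mk (i : ℕ) ⟶ SimplexCategory.mk (chainObj F i))
    (hβ : IsLadderB (chainObj F) (chainMap F) β) :
    (Λ X).app (op (SimplexCategory.mk k))
        ((nerveFunctor.map (X := Cat.of (El (sdF.obj X))) (Y := Cat.of (El X)) (elSd X).toCatHom).app
          (op (SimplexCategory.mk k)) F)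
      = (sdF.obj X).map (β (Fin.last k)).op (F.obj (Fin.last k)).σ := by
  obtain ⟨α, hα, hΛF⟩ := hΛ X k
    ((nerveFunctor.map (X := Cat.of (El (sdF.obj X))) (Y := Cat.of (El X)) (elSd X).toCatHom).app
      (op (SimplexCategory.mk k)) F)
  rw [hΛF, hα.ext hβ.Q_map (Fin.last k)]
  rfl

end DecompPaper
end

section
/- Let D be a decomposition space and p : F → tw(D) a discrete fibration of categories. Then there is an isomorphism of categories over el(sd D) between el(N(F)) (where N(F) → N(tw D) ≅ sd(D) makes el(N F) a discrete fibration over el(sd D)) and the pullback of p along the composite functor λ_D ∘ ω_D : el(sd D) → el(D) → tw(D); the isomorphism sends an n-chain of arrows z_0 → ⋯ → z_n in F (an object of el(N F)) to its last element z_n. -/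
open CategoryTheory CategoryTheory.Limits Opposite Simplicial

namespace DecompPaper

/-!
Since `p` is a discrete fibration, a chain `c` in `TD` together with an object `z` of `F` over
its last vertex lifts to a unique chain in `F` ending at `z`. Hence `el(N F)` is the strict
pullback of `p` along the last-vertex functor `el(N TD) ⥤ TD`, `(n, c) ↦ c(n)`.

It remains to identify this functor with `λ_D ∘ ω_D` along the isomorphism
`el(N TD) ≅ el(sd D)` induced by `eD`. On objects this is `Λ` in degree `0`: the active map
`Q[0] ⟶ Q[n]` is `Q` of the last vertex `[0] ⟶ [n]`, so `λ_D(2n+1, eD c) = c(n)`. On morphisms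
it is `Λ` in degree `1`: for `f : [m] ⟶ [n]`, the active ladder over `Q f` ends in `Q` of the
edge `f(m) ≤ n` of `[n]`, so `λ_D` sends `Q f` to the arrow `c(f(m)) ⟶ c(n)`.
-/

@[simp]
lemma Q_obj_len (a : SimplexCategory) : (Q.obj a).len = 2 * a.len + 1 := rfl

lemma Q_map_apply_of_add_eq {m n : ℕ} (f : ⦋m⦌ ⟶ ⦋n⦌) (i : Fin ((Q.obj ⦋m⦌).len + 1))
    (t : Fin (m + 1)) (h : (i : ℕ) + t = m) :
    ((Q.map f).toOrderHom i : ℕ) = n - f.toOrderHom t := by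
  have hi : (i : ℕ) ≤ m := by omega
  change (Qfun f.toOrderHom i : ℕ) = _
  rw [Qfun_val_le _ _ hi, natApp_of_le _ (by omega)]
  simp only [SimplexCategory.len_mk, show m - (i : ℕ) = t by omega]

lemma Q_map_apply_of_eq_add {m n : ℕ} (f : ⦋m⦌ ⟶ ⦋n⦌) (i : Fin ((Q.obj ⦋m⦌).len + 1))
    (t : Fin (m + 1)) (h : (i : ℕ) = m + 1 + t) :
    ((Q.map f).toOrderHom i : ℕ) = n + 1 + f.toOrderHom t := by
  have hi : ¬ (i : ℕ) ≤ m := by omega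
  have hlt := i.isLt
  simp only [Q_obj_len, SimplexCategory.len_mk] at hlt
  change (Qfun f.toOrderHom i : ℕ) = _
  rw [Qfun_val_gt _ _ hi, natApp_of_le _ (by simp only [SimplexCategory.len_mk]; omega)]
  simp only [SimplexCategory.len_mk, show (i : ℕ) - (m + 1) = t by omega]

lemma IsActive.eq_Q_map_const_last {n : ℕ} {α : Q.obj ⦋0⦌ ⟶ Q.obj ⦋n⦌} (hα : IsActive α) :
    α = Q.map (SimplexCategory.const ⦋0⦌ ⦋n⦌ (Fin.last n)) := by
  ext ⟨j, hj⟩ : 3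
  apply Fin.ext
  change j < 2 at hj
  interval_cases j
  · rw [Q_map_apply_of_add_eq _ _ 0 rfl]
    exact (congrArg Fin.val hα.1).trans (by simp)
  · rw [Q_map_apply_of_eq_add _ _ 0 rfl]
    exact (congrArg Fin.val hα.2).trans (by simp; omega)

lemma mkOfLe_apply_one {n : ℕ} {a b : Fin (n + 1)} (h : a ≤ b) :
    (SimplexCategory.mkOfLe a b h).toOrderHom 1 = b := rfl

lemma eq_Q_map_mkOfLe_of_isActive {m n : ℕ} (f : ⦋m⦌ ⟶ ⦋n⦌) {α₀ : Q.obj ⦋0⦌ ⟶ Q.obj ⦋m⦌}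
    {α₁ : Q.obj ⦋1⦌ ⟶ Q.obj ⦋n⦌} (h₀ : IsActive α₀) (h₁ : IsActive α₁)
    (hcomm : Q.map (SimplexCategory.δ (Fin.last 1)) ≫ α₁ = α₀ ≫ Q.map f) :
    α₁ = Q.map (SimplexCategory.mkOfLe (f.toOrderHom (Fin.last m)) (Fin.last n)
      (Fin.le_last _)) := by
  have hpt (j) : α₁.toOrderHom ((Q.map (SimplexCategory.δ (Fin.last 1))).toOrderHom j)
      = (Q.map f).toOrderHom (α₀.toOrderHom j) :=
    congrArg (fun g => g.toOrderHom j) hcomm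
  -- On `Q[1] = {1' < 0' < 0 < 1}`, activity fixes `α₁` at `1'` and `1`, and the ladder square
  -- fixes it at `0'` and `0`, the image of `Q(d⊤)`.
  ext ⟨j, hj⟩ : 3
  apply Fin.ext
  change j < 4 at hj
  interval_cases j
  · rw [Q_map_apply_of_add_eq _ _ 1 rfl, mkOfLe_apply_one]
    exact (congrArg Fin.val h₁.1).trans (by simp)
  · refine (congrArg Fin.val ((hpt 0).trans (congrArg _ h₀.1))).trans ?_
    rw [Q_map_apply_of_add_eq _ _ (Fin.last m) (by simp), Q_map_apply_of_add_eq _ _ 0 rfl]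
    rfl
  · refine (congrArg Fin.val ((hpt 1).trans (congrArg _ h₀.2))).trans ?_
    rw [Q_map_apply_of_eq_add _ _ (Fin.last m) (by simp; omega),
      Q_map_apply_of_eq_add _ _ 0 rfl]
    rfl
  · rw [Q_map_apply_of_eq_add _ _ 1 rfl, mkOfLe_apply_one]
    exact (congrArg Fin.val h₁.2).trans (by simp; omega)

lemma El.hom_hext {X : SSet.{0}} {a b a' b' : El X} (ha : a = a') (hb : b = b')
    {f : a ⟶ b} {f' : a' ⟶ b'} (h : f.1 ≍ f'.1) : f ≍ f' := by
  subst ha hb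
  exact heq_of_eq (Subtype.ext (eq_of_heq h))

section LastVertex

variable {C : Type} [SmallCategory C]

lemma El.nerve_obj_eq {a b : El (nerve C)} (f : a ⟶ b) (i : Fin (a.n + 1)) :
    a.σ.obj i = b.σ.obj (f.1.toOrderHom i) :=
  Functor.congr_obj f.2.symm i

lemma El.nerve_map_eq {a b : El (nerve C)} (f : a ⟶ b) {i j : Fin (a.n + 1)} (h : i ≤ j) :
    a.σ.map (homOfLE h) = eqToHom (El.nerve_obj_eq f i) ≫
      b.σ.map (homOfLE (f.1.toOrderHom.monotone h)) ≫ eqToHom (El.nerve_obj_eq f j).symm :=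
  Functor.congr_hom f.2.symm _

variable (C) in
def lastVertex : El (nerve C) ⥤ C where
  obj e := e.σ.obj (Fin.last e.n)
  map {a b} f := eqToHom (El.nerve_obj_eq f _) ≫ b.σ.map (homOfLE (Fin.le_last _))
  map_id a := by
    change 𝟙 _ ≫ a.σ.map (𝟙 _) = _
    erw [Category.id_comp, CategoryTheory.Functor.map_id]
    rfl
  map_comp {a b c} f g := by
    rw [El.nerve_map_eq g]
    simp only [Category.assoc, eqToHom_trans_assoc, eqToHom_refl, Category.id_comp]
    erw [← Functor.map_comp]
    rfl

lemma lastVertex_comp {F : Type} [SmallCategory F] (p : F ⥤ C) :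
    lastVertex F ⋙ p = elMap (nerveMap p) ⋙ lastVertex C :=
  Functor.hext (fun _ => rfl) fun _ _ f => by
    simp only [Functor.comp_map, lastVertex, Functor.map_comp, eqToHom_map,
      eqToHom_comp_heq_iff, heq_eqToHom_comp_iff]
    rfl

end LastVertex

namespace StrictPB

variable {A A' B C : Type} [SmallCategory A] [SmallCategory A'] [SmallCategory B]
  [SmallCategory C] {G : A ⥤ C} {G' : A' ⥤ C} {p : B ⥤ C}

lemma ext {x y : StrictPB G p} (h₁ : x.pt = y.pt) (h₂ : x.fib = y.fib) : x = y := by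
  cases x; cases y
  cases h₁; cases h₂
  rfl

lemma hom_hext {x y x' y' : StrictPB G p} (hx : x = x') (hy : y = y') {f : x ⟶ y}
    {f' : x' ⟶ y'} (h₁ : f.1.1 ≍ f'.1.1) (h₂ : f.1.2 ≍ f'.1.2) : f ≍ f' := by
  subst hx hy
  exact heq_of_eq (Subtype.ext (Prod.ext (eq_of_heq h₁) (eq_of_heq h₂)))

lemma hom_ext_of_isDiscreteFibration (hp : IsDiscreteFibration p) {x y : StrictPB G p}
    {f g : x ⟶ y} (h : f.1.1 = g.1.1) : f = g := by
  refine Subtype.ext (Prod.ext h ?_)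
  have hpm : p.map f.1.2 = p.map g.1.2 := by rw [f.2, g.2, h]
  have h1 : (⟨x.fib, f.1.2⟩ : Σ z : B, z ⟶ y.fib) = ⟨x.fib, g.1.2⟩ :=
    (hp y.fib (p.obj x.fib) (p.map f.1.2)).unique ⟨rfl, by simp⟩ ⟨rfl, by simp [hpm]⟩
  exact eq_of_heq (Sigma.mk.inj h1).2

lemma hom_hext_of_isDiscreteFibration (hp : IsDiscreteFibration p) {x y x' y' : StrictPB G p}
    (hx : x = x') (hy : y = y') {f : x ⟶ y} {f' : x' ⟶ y'} (h : f.1.1 ≍ f'.1.1) : f ≍ f' := by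
  subst hx hy
  exact heq_of_eq (hom_ext_of_isDiscreteFibration hp (eq_of_heq h))

variable (G p) in
def fibProj : StrictPB G p ⥤ B where
  obj x := x.fib
  map f := f.1.2

variable (G p) in
lemma fibProj_comp : fibProj G p ⋙ p = pbProj G p ⋙ G :=
  CategoryTheory.Functor.ext (fun x => x.eq) (fun _ _ f => f.2)

def lift {E : Type} [SmallCategory E] (P : E ⥤ A) (Z : E ⥤ B) (h : Z ⋙ p = P ⋙ G) :
    E ⥤ StrictPB G p where
  obj e := ⟨P.obj e, Z.obj e, Functor.congr_obj h e⟩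
  map f := ⟨(P.map f, Z.map f), Functor.congr_hom h f⟩

def mapBase (H : A ⥤ A') (h : H ⋙ G' = G) : StrictPB G p ⥤ StrictPB G' p :=
  lift (pbProj G p ⋙ H) (fibProj G p) (by rw [fibProj_comp, Functor.assoc, h])

lemma mapBase_comp_mapBase {H : A ⥤ A'} {K : A' ⥤ A} (hHK : H ⋙ K = 𝟭 A) (h : H ⋙ G' = G)
    (h' : K ⋙ G = G') : mapBase (p := p) H h ⋙ mapBase K h' = 𝟭 _ :=
  have hobj (x : StrictPB G p) : (mapBase K h').obj ((mapBase H h).obj x) = x :=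
    ext (Functor.congr_obj hHK x.pt) rfl
  Functor.hext hobj fun _ _ f =>
    hom_hext (hobj _) (hobj _) (Functor.hcongr_hom hHK f.1.1) HEq.rfl

def isoOfBaseIso (H : A ⥤ A') (K : A' ⥤ A) (hHK : H ⋙ K = 𝟭 A) (hKH : K ⋙ H = 𝟭 A')
    (h : H ⋙ G' = G) : Cat.of (StrictPB G p) ≅ Cat.of (StrictPB G' p) :=
  have h' : K ⋙ G = G' := by rw [← h, ← Functor.assoc, hKH, Functor.id_comp]
  { hom := (mapBase H h).toCatHom
    inv := (mapBase K h').toCatHom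
    hom_inv_id := Cat.ext (mapBase_comp_mapBase hHK h h')
    inv_hom_id := Cat.ext (mapBase_comp_mapBase hKH h' h) }

end StrictPB

namespace IsDiscreteFibration

variable {F C : Type} [SmallCategory F] [SmallCategory C] {p : F ⥤ C}
  (hp : IsDiscreteFibration p)

noncomputable def lift {z : F} {c : C} (f : c ⟶ p.obj z) : Σ x : F, x ⟶ z :=
  (hp z c f).choose

lemma obj_lift {z : F} {c : C} (f : c ⟶ p.obj z) : p.obj (hp.lift f).1 = c :=
  (hp z c f).choose_spec.1.choose

lemma map_lift {z : F} {c : C} (f : c ⟶ p.obj z) :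
    p.map (hp.lift f).2 = eqToHom (hp.obj_lift f) ≫ f :=
  (hp z c f).choose_spec.1.choose_spec

lemma eq_lift {z : F} {c : C} (f : c ⟶ p.obj z) (g : Σ x : F, x ⟶ z)
    (h : p.obj g.1 = c) (hg : p.map g.2 = eqToHom h ≫ f) : g = hp.lift f :=
  (hp z c f).choose_spec.2 g ⟨h, hg⟩

lemma heq_lift_snd {z x : F} {c : C} (f : c ⟶ p.obj z) (g : x ⟶ z) (h : p.obj x = c)
    (hg : p.map g = eqToHom h ≫ f) : g ≍ (hp.lift f).2 :=
  (Sigma.ext_iff.1 (hp.eq_lift f ⟨x, g⟩ h hg)).2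

section ChainLift

variable {n : ℕ} (c : ComposableArrows C n) (z : F) (hz : p.obj z = c.obj (Fin.last n))

noncomputable def liftToLast (i : Fin (n + 1)) : Σ x : F, x ⟶ z :=
  hp.lift (c.map (homOfLE (Fin.le_last i)) ≫ eqToHom hz.symm)

noncomputable def liftBetween {i j : Fin (n + 1)} (h : i ≤ j) :
    Σ x : F, x ⟶ (hp.liftToLast c z hz j).1 :=
  hp.lift (c.map (homOfLE h) ≫ eqToHom (hp.obj_lift _).symm)

lemma obj_liftToLast (i : Fin (n + 1)) : p.obj (hp.liftToLast c z hz i).1 = c.obj i :=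
  hp.obj_lift _

lemma map_liftToLast (i : Fin (n + 1)) :
    p.map (hp.liftToLast c z hz i).2 =
      eqToHom (hp.obj_liftToLast c z hz i) ≫ c.map (homOfLE (Fin.le_last i)) ≫ eqToHom hz.symm :=
  hp.map_lift _

lemma obj_liftBetween {i j : Fin (n + 1)} (h : i ≤ j) :
    p.obj (hp.liftBetween c z hz h).1 = c.obj i :=
  hp.obj_lift _

lemma map_liftBetween {i j : Fin (n + 1)} (h : i ≤ j) :
    p.map (hp.liftBetween c z hz h).2 = eqToHom (hp.obj_liftBetween c z hz h) ≫
      c.map (homOfLE h) ≫ eqToHom (hp.obj_liftToLast c z hz j).symm :=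
  hp.map_lift _

lemma heq_liftBetween_snd {i j : Fin (n + 1)} (h : i ≤ j) {x : F}
    (g : x ⟶ (hp.liftToLast c z hz j).1) (hx : p.obj x = c.obj i)
    (hg : p.map g = eqToHom hx ≫ c.map (homOfLE h) ≫ eqToHom (hp.obj_liftToLast c z hz j).symm) :
    g ≍ (hp.liftBetween c z hz h).2 :=
  hp.heq_lift_snd _ g hx hg

lemma liftBetween_fst {i j : Fin (n + 1)} (h : i ≤ j) :
    (hp.liftBetween c z hz h).1 = (hp.liftToLast c z hz i).1 := by
  refine congrArg Sigma.fst (hp.eq_lift _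
    ⟨_, (hp.liftBetween c z hz h).2 ≫ (hp.liftToLast c z hz j).2⟩ (hp.obj_liftBetween c z hz h) ?_)
  simp only [Functor.map_comp, map_liftBetween, map_liftToLast, Category.assoc,
    eqToHom_trans_assoc, eqToHom_refl, Category.id_comp]
  rw [← Functor.map_comp_assoc, homOfLE_comp]

noncomputable def chainLift : ComposableArrows F n where
  obj i := (hp.liftToLast c z hz i).1
  map {i j} g := eqToHom (hp.liftBetween_fst c z hz (leOfHom g)).symm ≫
    (hp.liftBetween c z hz (leOfHom g)).2
  map_id i := by
    apply eq_of_heq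
    rw [eqToHom_comp_heq_iff]
    refine (hp.heq_liftBetween_snd c z hz _ (𝟙 _) (hp.obj_liftToLast c z hz i) ?_).symm
    simp
  map_comp {i j k} g g' := by
    apply eq_of_heq
    rw [eqToHom_comp_heq_iff]
    refine (hp.heq_liftBetween_snd c z hz _ _ (hp.obj_liftToLast c z hz i) ?_).symm
    simp only [Functor.map_comp, eqToHom_map, map_liftBetween, Category.assoc,
      eqToHom_trans_assoc, eqToHom_refl, Category.id_comp]
    rw [← Functor.map_comp_assoc, homOfLE_comp]

lemma chainLift_comp : hp.chainLift c z hz ⋙ p = c := by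
  refine Functor.hext (hp.obj_liftToLast c z hz) fun i j g => ?_
  simp only [chainLift, Functor.comp_map, Functor.map_comp, eqToHom_map, map_liftBetween,
    eqToHom_trans_assoc, eqToHom_comp_heq_iff, comp_eqToHom_heq_iff]
  rfl

lemma chainLift_obj_last : (hp.chainLift c z hz).obj (Fin.last n) = z :=
  (congrArg Sigma.fst (hp.eq_lift _ ⟨z, 𝟙 z⟩ hz (by simp))).symm

lemma eq_chainLift (σ : ComposableArrows F n) (hσ : σ ⋙ p = c) (hlast : σ.obj (Fin.last n) = z) :
    σ = hp.chainLift c z hz := by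
  subst hσ hlast
  have hobj (i : Fin (n + 1)) : σ.obj i = (hp.liftToLast (σ ⋙ p) _ hz i).1 :=
    congrArg Sigma.fst (hp.eq_lift _ ⟨σ.obj i, σ.map (homOfLE (Fin.le_last i))⟩ rfl (by simp))
  refine Functor.hext hobj fun i j g => ?_
  refine HEq.trans ?_ (eqToHom_comp_heq _ _).symm
  rw [← comp_eqToHom_heq_iff _ _ (hobj j)]
  refine hp.heq_liftBetween_snd _ _ hz _ _ rfl ?_
  rw [Functor.map_comp, eqToHom_map, eqToHom_refl, Category.id_comp]
  rfl

end ChainLift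

end IsDiscreteFibration

section ElNerve

variable {F C : Type} [SmallCategory F] [SmallCategory C] {p : F ⥤ C}
  (hp : IsDiscreteFibration p)

lemma nerve_map_chainLift {x y : StrictPB (lastVertex C) p} (φ : x ⟶ y) :
    (nerve F).map φ.1.1.1.op (hp.chainLift y.pt.σ y.fib y.eq) =
      hp.chainLift x.pt.σ x.fib x.eq := by
  refine hp.eq_chainLift _ _ _ _ ?_ ?_
  · exact (congrArg ((nerve C).map φ.1.1.1.op) (hp.chainLift_comp _ _ _)).trans φ.1.1.2
  · refine (congrArg Sigma.fst (hp.eq_lift _ ⟨x.fib, φ.1.2⟩ ?_ ?_)).symm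
    · exact x.eq.trans (El.nerve_obj_eq φ.1.1 _)
    · rw [φ.2]
      simp only [lastVertex, Category.assoc]
      erw [eqToHom_trans_assoc]
      rfl

noncomputable def StrictPB.toElNerve : StrictPB (lastVertex C) p ⥤ El (nerve F) where
  obj x := ⟨x.pt.n, hp.chainLift x.pt.σ x.fib x.eq⟩
  map φ := ⟨φ.1.1.1, nerve_map_chainLift hp φ⟩

variable (p) in
def elNerveToStrictPB : El (nerve F) ⥤ StrictPB (lastVertex C) p :=
  StrictPB.lift (elMap (nerveMap p)) (lastVertex F) (lastVertex_comp p)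

lemma elNerveToStrictPB_comp_toElNerve :
    elNerveToStrictPB p ⋙ StrictPB.toElNerve hp = 𝟭 _ :=
  have h (e : El (nerve F)) : (StrictPB.toElNerve hp).obj ((elNerveToStrictPB p).obj e) = e :=
    congrArg (El.mk e.n) (hp.eq_chainLift _ _ _ e.σ rfl rfl).symm
  Functor.hext h fun _ _ _ => El.hom_hext (h _) (h _) HEq.rfl

lemma toElNerve_comp_elNerveToStrictPB :
    StrictPB.toElNerve hp ⋙ elNerveToStrictPB p = 𝟭 _ :=
  have h (x : StrictPB (lastVertex C) p) :
      (elNerveToStrictPB p).obj ((StrictPB.toElNerve hp).obj x) = x :=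
    StrictPB.ext (congrArg (El.mk x.pt.n) (hp.chainLift_comp _ _ _))
      (hp.chainLift_obj_last _ _ _)
  Functor.hext h fun _ _ _ => StrictPB.hom_hext_of_isDiscreteFibration hp (h _) (h _)
    (El.hom_hext (congrArg _ (h _)) (congrArg _ (h _)) HEq.rfl)

noncomputable def elNerveIsoStrictPB :
    Cat.of (El (nerve F)) ≅ Cat.of (StrictPB (lastVertex C) p) where
  hom := (elNerveToStrictPB p).toCatHom
  inv := (StrictPB.toElNerve hp).toCatHom
  hom_inv_id := Cat.ext (elNerveToStrictPB_comp_toElNerve hp)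
  inv_hom_id := Cat.ext (toElNerve_comp_elNerveToStrictPB hp)

end ElNerve

section Lambda

variable {D : SSet.{0}} {TD : Type} [SmallCategory TD] {eD : nerve TD ≅ sdF.obj D}
  {lamD : El D ⥤ TD} {Λ : ∀ X : SSet.{0}, nerve (El X) ⟶ sdF.obj X}

lemma eD_hom_app_comp_lam
    (hlam : nerveFunctor.map (X := Cat.of (El D)) (Y := Cat.of TD) lamD.toCatHom ≫ eD.hom = Λ D)
    {k : ℕ} (x : ComposableArrows (El D) k) :
    eD.hom.app (op ⦋k⦌) (x ⋙ lamD) = (Λ D).app (op ⦋k⦌) x :=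
  ConcreteCategory.congr_hom (NatTrans.congr_app hlam (op ⦋k⦌)) x

lemma lam_obj_eq_last (hΛ : IsLambda Λ)
    (hlam : nerveFunctor.map (X := Cat.of (El D)) (Y := Cat.of TD) lamD.toCatHom ≫ eD.hom = Λ D)
    (n : ℕ) (c : ComposableArrows TD n) :
    lamD.obj ⟨2 * n + 1, eD.hom.app (op ⦋n⦌) c⟩ = c.obj (Fin.last n) := by
  obtain ⟨α, ⟨hα, -⟩, hval⟩ := hΛ D 0 (.mk₀ ⟨2 * n + 1, eD.hom.app (op ⦋n⦌) c⟩)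
  have hα₀ : α (Fin.last 0) = Q.map (SimplexCategory.const ⦋0⦌ ⦋n⦌ (Fin.last n)) :=
    (hα _).eq_Q_map_const_last
  have h := (eD_hom_app_comp_lam hlam _).trans <| hval.trans <|
    (congrArg (fun g : Q.obj ⦋0⦌ ⟶ Q.obj ⦋n⦌ => D.map g.op (eD.hom.app (op ⦋n⦌) c)) hα₀).trans
    (NatTrans.naturality_apply eD.hom (SimplexCategory.const ⦋0⦌ ⦋n⦌ (Fin.last n)).op c).symm
  exact Functor.congr_obj ((eD.app _).toEquiv.injective h) 0

lemma lam_map_heq_lastVertex_map (hΛ : IsLambda Λ)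
    (hlam : nerveFunctor.map (X := Cat.of (El D)) (Y := Cat.of TD) lamD.toCatHom ≫ eD.hom = Λ D)
    {a b : El (nerve TD)} (f : a ⟶ b) :
    lamD.map ((elSd D).map ((elMap eD.hom).map f)) ≍ (lastVertex TD).map f := by
  set ψ := (elSd D).map ((elMap eD.hom).map f)
  obtain ⟨α, ⟨hα, hcomm⟩, hval⟩ := hΛ D 1 (.mk₁ ψ)
  have hα₁ : α (Fin.last 1) = Q.map (SimplexCategory.mkOfLe _ _ (Fin.le_last _)) :=
    eq_Q_map_mkOfLe_of_isActive f.1 (hα 0) (hα 1) (hcomm 0)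
  have h := (eD_hom_app_comp_lam hlam _).trans <| hval.trans <|
    (congrArg (fun g : Q.obj ⦋1⦌ ⟶ Q.obj ⦋b.n⦌ => D.map g.op (eD.hom.app (op ⦋b.n⦌) b.σ)) hα₁).trans
    (NatTrans.naturality_apply eD.hom (SimplexCategory.mkOfLe _ _ (Fin.le_last _)).op b.σ).symm
  have h' := Functor.hcongr_hom ((eD.app _).toEquiv.injective h) (homOfLE (Fin.zero_le 1))
  exact h'.trans (eqToHom_comp_heq _ _).symm

lemma elMap_comp_elSd_comp_lam_eq_lastVertex (hΛ : IsLambda Λ)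
    (hlam : nerveFunctor.map (X := Cat.of (El D)) (Y := Cat.of TD) lamD.toCatHom ≫ eD.hom = Λ D) :
    elMap eD.hom ⋙ elSd D ⋙ lamD = lastVertex TD :=
  Functor.hext (fun e => lam_obj_eq_last hΛ hlam e.n e.σ) fun _ _ f =>
    lam_map_heq_lastVertex_map hΛ hlam f

end Lambda

theorem statement16_general {D : SSet.{0}}
    (Λ : ∀ X : SSet.{0}, nerve (El X) ⟶ sdF.obj X) (hΛ : IsLambda Λ)
    (TD : Type) [SmallCategory TD] (eD : nerve TD ≅ sdF.obj D)
    (lamD : El D ⥤ TD)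
    (hlam : nerveFunctor.map (X := Cat.of (El D)) (Y := Cat.of TD) lamD.toCatHom ≫ eD.hom = Λ D)
    (F : Type) [SmallCategory F] (p : F ⥤ TD) (hp : IsDiscreteFibration p) :
    ∃ Φ : Cat.of (El (nerve F)) ≅ Cat.of (StrictPB (elSd D ⋙ lamD) p),
      (Φ.hom.toFunctor ⋙ pbProj (elSd D ⋙ lamD) p
          = elMap (nerveFunctor.map (X := Cat.of F) (Y := Cat.of TD) p.toCatHom ≫ eD.hom)) ∧
        ∀ e : El (nerve F), (Φ.hom.toFunctor.obj e).fib = e.σ.obj (Fin.last e.n) :=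
  ⟨elNerveIsoStrictPB hp ≪≫ StrictPB.isoOfBaseIso (elMap eD.hom) (elMap eD.inv)
      (congrArg elMap eD.hom_inv_id) (congrArg elMap eD.inv_hom_id)
      (elMap_comp_elSd_comp_lam_eq_lastVertex hΛ hlam), rfl, fun _ => rfl⟩

theorem statement16 {D : SSet.{0}} (hD : IsDecomp D)
    (Λ : ∀ X : SSet.{0}, nerve (El X) ⟶ sdF.obj X) (hΛ : IsLambda Λ)
    (TD : Type) [SmallCategory TD] (eD : nerve TD ≅ sdF.obj D)
    (lamD : El D ⥤ TD)
    (hlam : nerveFunctor.map (X := Cat.of (El D)) (Y := Cat.of TD) lamD.toCatHom ≫ eD.hom = Λ D)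
    (F : Type) [SmallCategory F] (p : F ⥤ TD) (hp : IsDiscreteFibration p) :
    ∃ Φ : Cat.of (El (nerve F)) ≅ Cat.of (StrictPB (elSd D ⋙ lamD) p),
      (Φ.hom.toFunctor ⋙ pbProj (elSd D ⋙ lamD) p
          = elMap (nerveFunctor.map (X := Cat.of F) (Y := Cat.of TD) p.toCatHom ≫ eD.hom)) ∧
        ∀ e : El (nerve F), (Φ.hom.toFunctor.obj e).fib = e.σ.obj (Fin.last e.n) :=
  statement16_general Λ hΛ TD eD lamD hlam F p hp

end DecompPaper
end
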